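/- Let n be a positive integer and let G be a connected graph with at most 4n−2 edges such that G → (nK₂, C₃). Suppose that for every positive integer k, every connected graph G′ with either fewer vertices than G, or the same number of vertices and fewer edges than G, satisfies G′ ↛ (kK₂, C₃) whenever G′ has at most 4k−2 edges. Then G has no cut edge, i.e., for every edge e of G the graph G − e is still connected. -/

import Mathlib

open SimpleGraph

/-- `G` contains a copy of `H`, i.e. there is an injective graph homomorphism from `H` to `G`. -/
def ContainsCopy {V W : Type*} (G : SimpleGraph V) (H : SimpleGraph W) : Prop :=
  ∃ f : H →g G, Function.Injective f

/-- `G` arrows `(G₁, G₂)`: for every red/blue colouring of the edges of `G`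
(given by a subgraph `R ≤ G` of red edges, the blue edges being `G \ R`),
there is a red copy of `G₁` or a blue copy of `G₂`. -/
def Arrows {V V₁ V₂ : Type*} (G : SimpleGraph V) (G₁ : SimpleGraph V₁) (G₂ : SimpleGraph V₂) :
    Prop :=
  ∀ R : SimpleGraph V, R ≤ G → ContainsCopy R G₁ ∨ ContainsCopy (G \ R) G₂

/-- The matching `nK₂` with `n` edges. -/
def Matching (n : ℕ) : SimpleGraph (Fin n × Fin 2) where
  Adj a b := a.1 = b.1 ∧ a.2 ≠ b.2
  symm := by refine ⟨?_⟩; intro a b h; exact ⟨h.1.symm, h.2.symm⟩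
  loopless := by refine ⟨?_⟩; intro a h; exact h.2 rfl

/-- `n` disjoint copies of the graph `H`. -/
def Copies (n : ℕ) {W : Type*} (H : SimpleGraph W) : SimpleGraph (Fin n × W) where
  Adj a b := a.1 = b.1 ∧ H.Adj a.2 b.2
  symm := by refine ⟨?_⟩; intro a b h; exact ⟨h.1.symm, h.2.symm⟩
  loopless := by refine ⟨?_⟩; intro a h; exact H.loopless.irrefl _ h.2

/-- Disjoint union of two graphs. -/
def DisjUnion {V W : Type*} (G : SimpleGraph V) (H : SimpleGraph W) : SimpleGraph (V ⊕ W) where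
  Adj a b :=
    match a, b with
    | Sum.inl x, Sum.inl y => G.Adj x y
    | Sum.inr x, Sum.inr y => H.Adj x y
    | _, _ => False
  symm := by
    refine ⟨?_⟩
    rintro (x | x) (y | y) h
    · exact G.symm.symm _ _ h
    · exact h.elim
    · exact h.elim
    · exact H.symm.symm _ _ h
  loopless := by
    refine ⟨?_⟩
    rintro (x | x) h
    · exact G.loopless.irrefl _ h
    · exact H.loopless.irrefl _ h

/-! If `e = uv` were a cut edge, `G - e` would split into the component `A` of `u` and the
component `B` of `v`, which together carry `a + b ≤ 4n - 3` edges. Both are connected and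
smaller than `G`, so by minimality they admit colourings with no red `k_A K₂`, resp. `k_B K₂`,
and no blue triangle, where `k_A = ⌈(a + 2)/4⌉` and `k_B = ⌈(b + 2)/4⌉`. Colour `e` blue and
glue: a cut edge lies in no triangle, so a blue triangle of `G` would be one of `A` or `B`, and a
red matching has at most `(k_A - 1) + (k_B - 1) < n` edges, since `k_A + k_B ≤ n + 1`. -/

namespace SimpleGraph

variable {V : Type*} {G : SimpleGraph V}

theorem induce_sdiff (G R : SimpleGraph V) (s : Set V) :
    (G \ R).induce s = G.induce s \ R.induce s := rfl

theorem induce_map_subtype_sup {s t : Set V} (hst : Disjoint s t)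
    (R : SimpleGraph s) (R' : SimpleGraph t) :
    (R.map (Function.Embedding.subtype _) ⊔ R'.map (Function.Embedding.subtype _)).induce s =
      R := by
  ext ⟨x, hx⟩ ⟨y, hy⟩
  simp only [comap_adj, sup_adj, map_adj, Function.Embedding.subtype_apply]
  constructor
  · rintro (⟨⟨a, _⟩, ⟨b, _⟩, h, rfl, rfl⟩ | ⟨⟨a, ha⟩, -, -, rfl, -⟩)
    · exact h
    · exact (hst.notMem_of_mem_left hx ha).elim
  · exact fun h ↦ .inl ⟨_, _, h, rfl, rfl⟩

theorem ncard_edgeSet_induce_add_ncard_edgeSet_induce_compl_lt [Finite V] {A : Set V}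
    {x y : V} (hx : x ∈ A) (hy : y ∉ A) (hxy : G.Adj x y) :
    (G.induce A).edgeSet.ncard + (G.induce Aᶜ).edgeSet.ncard < G.edgeSet.ncard := by
  set GA := (G.induce A).map (Function.Embedding.subtype _)
  set GB := (G.induce Aᶜ).map (Function.Embedding.subtype _)
  have hGA : ∀ {a b}, GA.Adj a b → a ∈ A ∧ b ∈ A := by
    rintro _ _ ⟨-, a, b, -, rfl, rfl⟩
    exact ⟨a.2, b.2⟩
  have hGB : ∀ {a b}, GB.Adj a b → a ∉ A ∧ b ∉ A := by
    rintro _ _ ⟨-, a, b, -, rfl, rfl⟩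
    exact ⟨a.2, b.2⟩
  have hdisj : Disjoint GA.edgeSet GB.edgeSet := by
    rw [Set.disjoint_left]
    rintro ⟨a, b⟩ hA hB
    exact (hGB hB).1 (hGA hA).1
  have hlt : GA ⊔ GB < G := by
    refine lt_of_le_of_ne (sup_le ((map_le_iff_le_comap _ _ _).2 le_rfl)
      ((map_le_iff_le_comap _ _ _).2 le_rfl)) fun h ↦ ?_
    rw [← h] at hxy
    rcases hxy with hxy | hxy
    · exact hy (hGA hxy).2
    · exact (hGB hxy).1 hx
  have hcard : ∀ B : Set V, ((G.induce B).map (Function.Embedding.subtype _)).edgeSet.ncard =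
      (G.induce B).edgeSet.ncard := fun B ↦ by
    rw [edgeSet_map]
    exact Set.ncard_image_of_injective _ (Function.Embedding.subtype _).sym2Map.injective
  calc (G.induce A).edgeSet.ncard + (G.induce Aᶜ).edgeSet.ncard = (GA ⊔ GB).edgeSet.ncard := by
        rw [edgeSet_sup, Set.ncard_union_eq hdisj, hcard, hcard]
    _ < G.edgeSet.ncard := Set.ncard_lt_ncard (edgeSet_strict_mono hlt)

theorem ConnectedComponent.connected_induce_supp_of_le {G' : SimpleGraph V} (hle : G' ≤ G)
    (C : G'.ConnectedComponent) : (G.induce C.supp).Connected :=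
  C.connected_toSimpleGraph.mono fun _ _ h ↦ hle h

theorem Reachable.reachable_deleteEdges_or {u v w : V} (h : G.Reachable u w) :
    (G.deleteEdges {s(u, v)}).Reachable u w ∨ (G.deleteEdges {s(u, v)}).Reachable v w := by
  rw [reachable_iff_reflTransGen] at h
  induction h with
  | refl => exact .inl .rfl
  | @tail y z _ hyz ih =>
    by_cases he : s(y, z) = s(u, v)
    · rcases Sym2.eq_iff.1 he with ⟨-, rfl⟩ | ⟨-, rfl⟩
      · exact .inr .rfl
      · exact .inl .rfl
    · have hyz' : (G.deleteEdges {s(u, v)}).Adj y z := by simpa [hyz] using he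
      exact ih.imp (·.trans hyz'.reachable) (·.trans hyz'.reachable)

theorem IsBridge.compl_supp_connectedComponentMk {u v : V} (hG : G.Preconnected)
    (hb : G.IsBridge s(u, v)) :
    ((G.deleteEdges {s(u, v)}).connectedComponentMk u).suppᶜ =
      ((G.deleteEdges {s(u, v)}).connectedComponentMk v).supp := by
  ext w
  simp only [Set.mem_compl_iff, ConnectedComponent.mem_supp_iff, ConnectedComponent.eq]
  rw [isBridge_iff] at hb
  rcases (hG u w).reachable_deleteEdges_or (v := v) with h | h
  · exact iff_of_false (not_not.2 h.symm) fun h' ↦ hb (h.trans h')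
  · exact iff_of_true (fun h' ↦ hb (h'.symm.trans h.symm)) h.symm

theorem not_isBridge_of_adj_of_adj {x y z : V} (hxz : G.Adj x z) (hyz : G.Adj y z) :
    ¬ G.IsBridge s(x, y) := by
  rw [isBridge_iff, not_not]
  by_cases hxy : x = y
  · exact hxy ▸ .rfl
  have hxz' : (G.deleteEdges {s(x, y)}).Adj x z := by
    simp [hxz, hyz.ne.symm, hxy]
  have hzy' : (G.deleteEdges {s(x, y)}).Adj z y := by
    simp [hyz.symm, hxz.ne.symm, Ne.symm hxy]
  exact hxz'.reachable.trans hzy'.reachable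

theorem IsBridge.reachable_deleteEdges_of_triangle {e : Sym2 V} (he : G.IsBridge e)
    (f : cycleGraph 3 →g G) (p q : Fin 3) : (G.deleteEdges {e}).Reachable (f p) (f q) := by
  by_cases hpq : p = q
  · exact hpq ▸ .rfl
  obtain ⟨r, hrp, hrq⟩ : ∃ r : Fin 3, r ≠ p ∧ r ≠ q := by revert p q; decide
  have hadj : ∀ {a b : Fin 3}, a ≠ b → G.Adj (f a) (f b) := fun h ↦
    f.map_adj (by rw [cycleGraph_three_eq_top]; exact h)
  have hne : s(f p, f q) ≠ e := fun h ↦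
    not_isBridge_of_adj_of_adj (hadj (Ne.symm hrp)) (hadj (Ne.symm hrq)) (h ▸ he)
  exact Adj.reachable (by simpa [hadj hpq] using hne)

theorem IsBridge.triangle_subset_supp_or_compl {e : Sym2 V} (he : G.IsBridge e)
    (C : (G.deleteEdges {e}).ConnectedComponent) (f : cycleGraph 3 →g G) :
    (∀ w, f w ∈ C.supp) ∨ ∀ w, f w ∈ C.suppᶜ := by
  have hsame : ∀ w, f w ∈ C.supp ↔ f 0 ∈ C.supp := fun w ↦ by
    rw [C.mem_supp_iff, C.mem_supp_iff,
      ConnectedComponent.sound (he.reachable_deleteEdges_of_triangle f w 0)]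
  by_cases h0 : f 0 ∈ C.supp
  · exact .inl fun w ↦ (hsame w).2 h0
  · exact .inr fun w ↦ mt (hsame w).1 h0

end SimpleGraph

namespace ContainsCopy

variable {U V W : Type*} {G : SimpleGraph U} {H : SimpleGraph V} {K : SimpleGraph W}

theorem trans (hGH : ContainsCopy G H) (hHK : ContainsCopy H K) : ContainsCopy G K := by
  obtain ⟨f, hf⟩ := hGH
  obtain ⟨g, hg⟩ := hHK
  exact ⟨f.comp g, hf.comp hg⟩

theorem induce_of_forall_mem {s : Set U} (f : H →g G) (hf : Function.Injective f)
    (hs : ∀ w, f w ∈ s) : ContainsCopy (G.induce s) H :=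
  ⟨⟨fun w ↦ ⟨f w, hs w⟩, f.map_adj⟩, fun _ _ h ↦ hf (congrArg Subtype.val h)⟩

end ContainsCopy

def Matching.embedding {k n : ℕ} (e : Fin k ↪ Fin n) : Matching k ↪g Matching n where
  toEmbedding := e.prodMap (.refl _)
  map_rel_iff' := by simp [Matching]

namespace ContainsCopy

variable {V : Type*} {R : SimpleGraph V} {k n : ℕ}

theorem matching_of_le (hkn : k ≤ n) (h : ContainsCopy R (Matching n)) :
    ContainsCopy R (Matching k) :=
  h.trans ⟨(Matching.embedding (Fin.castLEEmb hkn)).toHom, (Matching.embedding _).injective⟩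

theorem induce_matching {s : Set V} (hs : ∀ x y, R.Adj x y → x ∈ s → y ∈ s)
    (f : Matching n →g R) (hf : Function.Injective f) (S : Finset (Fin n))
    (hS : ∀ i ∈ S, f (i, 0) ∈ s) : ContainsCopy (R.induce s) (Matching S.card) := by
  let e := Matching.embedding (S.orderEmbOfFin rfl).toEmbedding
  refine .induce_of_forall_mem (f.comp e.toHom) (hf.comp e.injective) ?_
  rintro ⟨i, c⟩
  have h0 : f (S.orderEmbOfFin rfl i, 0) ∈ s := hS _ (S.orderEmbOfFin_mem rfl i)
  fin_cases c
  · exact h0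
  · have h01 : (Matching n).Adj (S.orderEmbOfFin rfl i, 0) (S.orderEmbOfFin rfl i, 1) :=
      ⟨rfl, Fin.zero_ne_one⟩
    exact hs _ _ (f.map_adj h01) h0

theorem matching_split {s : Set V} (hs : ∀ x y, R.Adj x y → (x ∈ s ↔ y ∈ s))
    (h : ContainsCopy R (Matching n)) :
    ∃ i j, i + j = n ∧ ContainsCopy (R.induce s) (Matching i) ∧
      ContainsCopy (R.induce sᶜ) (Matching j) := by
  classical
  obtain ⟨f, hf⟩ := h
  let S := Finset.univ.filter fun i ↦ f (i, 0) ∈ s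
  refine ⟨S.card, Sᶜ.card, by simp [Finset.card_add_card_compl], ?_, ?_⟩
  · exact .induce_matching (fun x y hxy ↦ (hs x y hxy).1) f hf S (by simp [S])
  · exact .induce_matching (s := sᶜ) (fun x y hxy ↦ mt (hs x y hxy).2) f hf Sᶜ
      (by simp [S])

end ContainsCopy

/-- Colourings of the two sides witnessing the failure of both conclusions glue to a colouring
of `G`; the red part has no edge between `A` and `Aᶜ`. -/
theorem Arrows.induce_or_induce_compl {V W : Type*} {G : SimpleGraph V} {H : SimpleGraph W}
    {A : Set V} {n k l : ℕ}
    (hH : ∀ f : H →g G, Function.Injective f → (∀ w, f w ∈ A) ∨ ∀ w, f w ∈ Aᶜ)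
    (h : Arrows G (Matching n) H) (hkl : k + l ≤ n + 1) :
    Arrows (G.induce A) (Matching k) H ∨ Arrows (G.induce Aᶜ) (Matching l) H := by
  by_contra! hcon
  obtain ⟨hA, hB⟩ := hcon
  simp only [Arrows, not_forall, not_or] at hA hB
  obtain ⟨RA, hRA, hredA, hblueA⟩ := hA
  obtain ⟨RB, hRB, hredB, hblueB⟩ := hB
  set R := RA.map (Function.Embedding.subtype _) ⊔ RB.map (Function.Embedding.subtype _)
  have hRA' : R.induce A = RA := induce_map_subtype_sup disjoint_compl_right RA RB
  have hRB' : R.induce Aᶜ = RB := by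
    rw [show R = RB.map _ ⊔ RA.map _ from sup_comm _ _]
    exact induce_map_subtype_sup disjoint_compl_left RB RA
  have hRG : R ≤ G :=
    sup_le ((map_le_iff_le_comap _ _ _).2 hRA) ((map_le_iff_le_comap _ _ _).2 hRB)
  have hRsides : ∀ x y, R.Adj x y → (x ∈ A ↔ y ∈ A) := by
    rintro x y (⟨-, a, b, -, rfl, rfl⟩ | ⟨-, a, b, -, rfl, rfl⟩)
    · exact iff_of_true a.2 b.2
    · exact iff_of_false a.2 b.2
  rcases h R hRG with hred | ⟨f, hf⟩
  · obtain ⟨i, j, rfl, hi, hj⟩ := hred.matching_split hRsides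
    rw [hRA'] at hi
    rw [hRB'] at hj
    have hik : i < k := by
      by_contra! hki
      exact hredA (hi.matching_of_le hki)
    have hjl : j < l := by
      by_contra! hlj
      exact hredB (hj.matching_of_le hlj)
    omega
  · rcases hH ((Hom.ofLE sdiff_le).comp f) hf with hfA | hfA
    · apply hblueA
      rw [← hRA', ← induce_sdiff]
      exact .induce_of_forall_mem f hf hfA
    · apply hblueB
      rw [← hRB', ← induce_sdiff]
      exact .induce_of_forall_mem f hf hfA

theorem no_cut_edge_general (n : ℕ) (V : Type) [Finite V]
    (G : SimpleGraph V) (hconn : G.Connected) (hE : G.edgeSet.ncard ≤ 4 * n - 2)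
    (harrow : Arrows G (Matching n) (cycleGraph 3))
    (hmin : ∀ k : ℕ, 0 < k → ∀ (W : Type), Finite W → ∀ H : SimpleGraph W,
      H.Connected →
      (Nat.card W < Nat.card V ∨
        (Nat.card W = Nat.card V ∧ H.edgeSet.ncard < G.edgeSet.ncard)) →
      H.edgeSet.ncard ≤ 4 * k - 2 →
      ¬ Arrows H (Matching k) (cycleGraph 3)) :
    ∀ e ∈ G.edgeSet, (G.deleteEdges {e}).Connected := by
  intro e he
  induction e with | h u v => ?_
  by_contra hdisc
  have hb : G.IsBridge s(u, v) := by
    by_contra h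
    exact hdisc (hconn.connected_delete_edge_of_not_isBridge h)
  set C := (G.deleteEdges {s(u, v)}).connectedComponentMk u
  have hv : v ∉ C.supp := fun h ↦ hb (ConnectedComponent.exact h).symm
  have hu : u ∉ C.suppᶜ := not_not.2 rfl
  have hA : (G.induce C.supp).Connected := C.connected_induce_supp_of_le (deleteEdges_le _)
  have hB : (G.induce C.suppᶜ).Connected := by
    rw [hb.compl_supp_connectedComponentMk hconn.preconnected]
    exact ConnectedComponent.connected_induce_supp_of_le (deleteEdges_le _) _
  have hedges := ncard_edgeSet_induce_add_ncard_edgeSet_induce_compl_lt (A := C.supp) rfl hv he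
  set a := (G.induce C.supp).edgeSet.ncard
  set b := (G.induce C.suppᶜ).edgeSet.ncard
  -- `(a + 5) / 4` is the least `k` with `a ≤ 4 * k - 2`.
  rcases Arrows.induce_or_induce_compl (k := (a + 5) / 4) (l := (b + 5) / 4)
      (fun f _ ↦ hb.triangle_subset_supp_or_compl C f) harrow (by omega) with h | h
  · exact hmin _ (by omega) _ inferInstance _ hA (.inl (Finite.card_subtype_lt hv)) (by omega) h
  · exact hmin _ (by omega) _ inferInstance _ hB (.inl (Finite.card_subtype_lt hu)) (by omega) h

/-- Under the minimality hypotheses, `G` has no cut edge: deleting any edge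
of `G` leaves a connected graph. -/
theorem no_cut_edge (n : ℕ) (hn : 0 < n) (V : Type) [Finite V]
    (G : SimpleGraph V) (hconn : G.Connected) (hE : G.edgeSet.ncard ≤ 4 * n - 2)
    (harrow : Arrows G (Matching n) (cycleGraph 3))
    (hmin : ∀ k : ℕ, 0 < k → ∀ (W : Type), Finite W → ∀ H : SimpleGraph W,
      H.Connected →
      (Nat.card W < Nat.card V ∨
        (Nat.card W = Nat.card V ∧ H.edgeSet.ncard < G.edgeSet.ncard)) →
      H.edgeSet.ncard ≤ 4 * k - 2 →
      ¬ Arrows H (Matching k) (cycleGraph 3)) :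
    ∀ e ∈ G.edgeSet, (G.deleteEdges {e}).Connected :=
  no_cut_edge_general n V G hconn hE harrow hmin
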